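/- arXiv:1712.05250 — 4 statements merged into one kernel-verified Lean document; each statement's English description precedes it below -/
import Mathlib

section
/- For every natural number n, the sum of binomial coefficients binom(n, i) over all i with 0 ≤ i ≤ n/4 is at most 2^n · e^{-n/8}. -/
/-!
Chernoff's exponential-moment trick: for `0 ≤ x ≤ 1` every term of `∑_{i ≤ k} C(n,i)` is at most
`x^(i-k) C(n,i)`, so the sum is at most `x^(-k) (1 + x)^n`. Taking `x = 1/3` and `k = n/4` gives
`3^(n/4) (4/3)^n`, and after raising to the eighth power the comparison with `2^n e^(-n/8)`
comes down to `e ≤ 729/256`.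
-/

open Finset

theorem sum_range_choose_mul_pow_le_one_add_pow {x : ℝ} (hx₀ : 0 ≤ x) (hx₁ : x ≤ 1) (n k : ℕ) :
    (∑ i ∈ range (k + 1), (n.choose i : ℝ)) * x ^ k ≤ (1 + x) ^ n := by
  set f : ℕ → ℝ := fun i ↦ x ^ i * 1 ^ (n - i) * n.choose i
  calc (∑ i ∈ range (k + 1), (n.choose i : ℝ)) * x ^ k
      ≤ ∑ i ∈ range (k + 1), f i := by
        rw [sum_mul]
        refine sum_le_sum fun i hi ↦ ?_
        have hik : x ^ k ≤ x ^ i :=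
          pow_le_pow_of_le_one hx₀ hx₁ (Nat.lt_succ_iff.mp (mem_range.mp hi))
        simpa [f, mul_comm] using mul_le_mul_of_nonneg_left hik (Nat.cast_nonneg (n.choose i))
    _ ≤ ∑ i ∈ range (max k n + 1), f i :=
        sum_le_sum_of_subset_of_nonneg (range_subset_range.mpr (by omega))
          fun i _ _ ↦ by positivity
    _ = ∑ i ∈ range (n + 1), f i := by
        refine (sum_subset (range_subset_range.mpr (by omega)) fun i _ hi ↦ ?_).symm
        simp [f, Nat.choose_eq_zero_of_lt (by simpa using hi : n < i)]
    _ = (1 + x) ^ n := by rw [add_comm 1 x, add_pow]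

theorem exp_one_le_729_div_256 : Real.exp 1 ≤ 729 / 256 :=
  Real.exp_one_lt_d9.le.trans (by norm_num)

theorem three_pow_mul_four_div_three_pow_le {n k : ℕ} (hk : 4 * k ≤ n) :
    (3 : ℝ) ^ k * (4 / 3) ^ n ≤ 2 ^ n * Real.exp (-(n : ℝ) / 8) := by
  have hrhs : 2 ^ n * Real.exp (-(n : ℝ) / 8) = (2 * Real.exp (-1 / 8)) ^ n := by
    rw [mul_pow, ← Real.exp_nat_mul]
    ring_nf
  have hbase : (4 : ℝ) ^ 8 / 3 ^ 6 ≤ (2 * Real.exp (-1 / 8)) ^ 8 := by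
    rw [mul_pow, ← Real.exp_nat_mul, show ((8 : ℕ) : ℝ) * (-1 / 8) = -1 by norm_num, Real.exp_neg,
      ← div_eq_mul_inv, le_div_iff₀ (Real.exp_pos 1)]
    nlinarith [exp_one_le_729_div_256]
  rw [hrhs, ← pow_le_pow_iff_left₀ (by positivity) (by positivity) (by norm_num : 8 ≠ 0)]
  calc ((3 : ℝ) ^ k * (4 / 3) ^ n) ^ 8 = ((3 : ℝ) ^ (4 * k)) ^ 2 * ((4 / 3) ^ 8) ^ n := by
        rw [mul_pow, ← pow_mul, ← pow_mul, ← pow_mul, ← pow_mul]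
        congr 2 <;> ring
    _ ≤ ((3 : ℝ) ^ n) ^ 2 * ((4 / 3) ^ 8) ^ n := by gcongr; norm_num
    _ = ((4 : ℝ) ^ 8 / 3 ^ 6) ^ n := by rw [← pow_mul, mul_comm n 2, pow_mul, ← mul_pow]; norm_num
    _ ≤ ((2 * Real.exp (-1 / 8)) ^ 8) ^ n := pow_le_pow_left₀ (by positivity) hbase n
    _ = ((2 * Real.exp (-1 / 8)) ^ n) ^ 8 := by rw [← pow_mul, ← pow_mul, mul_comm 8 n]

theorem chernoff_binomial (n : ℕ) :
    (∑ i ∈ Finset.range (n / 4 + 1), (n.choose i : ℝ)) ≤ 2 ^ n * Real.exp (-(n : ℝ) / 8) := by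
  have hsum :=
    sum_range_choose_mul_pow_le_one_add_pow (x := 1 / 3) (by norm_num) (by norm_num) n (n / 4)
  calc (∑ i ∈ range (n / 4 + 1), (n.choose i : ℝ))
      = 3 ^ (n / 4) * ((∑ i ∈ range (n / 4 + 1), (n.choose i : ℝ)) * (1 / 3) ^ (n / 4)) := by
        rw [one_div_pow]; field_simp
    _ ≤ 3 ^ (n / 4) * (4 / 3) ^ n := by gcongr; norm_num at hsum ⊢; linarith
    _ ≤ 2 ^ n * Real.exp (-(n : ℝ) / 8) := three_pow_mul_four_div_three_pow_le (by omega)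
end

section
/- For every real number a there exist constants c, C > 0 (depending only on a) such that for all s ≥ 0: c · e^s/(1+s)^a ≤ Σ_{k=0}^{∞} (s^k/k!) · 1/(k+1)^a ≤ C · e^s/(1+s)^a. -/
/-!
Write `S_t(s) = ∑ s^k/k! (k+1)^t`, the expectation of `(K+1)^t` for `K` Poisson of mean `s`,
times `e^s`. For an integer `m ≥ 0` the bound `S_m(s) ≲ e^s (1+s)^m` comes from
`(k+1)^m ≲ 1 + k(k-1)⋯(k-m+1)` and `∑ k(k-1)⋯(k-m+1) s^k/k! = s^m e^s`, and the bound
`S_{-m}(s) ≲ e^s (1+s)^{-m}` from `1/(k+1)^m ≲ k!/(k+m)!`. For real `t` and `m ≥ |t|`, the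
pointwise inequality `z^t ≤ z^m + z^{-m}` at `z = (k+1)/(1+s)` gives
`S_t(s) ≲ e^s (1+s)^t`. The lower bound follows from Cauchy–Schwarz,
`e^{2s} ≤ S_t(s) S_{-t}(s)`, and the upper bound for `S_{-t}`.
-/

open Real Nat Finset

noncomputable def weightedExpTerm (t s : ℝ) (k : ℕ) : ℝ := s ^ k / k ! * ((k : ℝ) + 1) ^ t

theorem weightedExpTerm_nonneg (t : ℝ) {s : ℝ} (hs : 0 ≤ s) (k : ℕ) :
    0 ≤ weightedExpTerm t s k := by
  rw [weightedExpTerm]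
  positivity

theorem Real.hasSum_pow_div_factorial (x : ℝ) : HasSum (fun k : ℕ => x ^ k / k !) (exp x) :=
  exp_eq_exp_ℝ ▸ NormedSpace.expSeries_div_hasSum_exp x

theorem Real.hasSum_descFactorial_mul_pow_div_factorial (m : ℕ) (x : ℝ) :
    HasSum (fun k : ℕ => (k.descFactorial m : ℝ) * x ^ k / k !) (x ^ m * exp x) := by
  have hshift (j : ℕ) :
      ((j + m).descFactorial m : ℝ) * x ^ (j + m) / (j + m)! = x ^ m * (x ^ j / j !) := by
    have h := Nat.factorial_mul_descFactorial (Nat.le_add_left m j)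
    rw [Nat.add_sub_cancel] at h
    rw [← h]
    push_cast
    field_simp
    ring
  have hhead : ∑ i ∈ range m, (i.descFactorial m : ℝ) * x ^ i / i ! = 0 :=
    sum_eq_zero fun i hi => by simp [Nat.descFactorial_eq_zero_iff_lt.2 (mem_range.1 hi)]
  rw [← hasSum_nat_add_iff' m, hhead, sub_zero]
  simpa only [hshift] using (hasSum_pow_div_factorial x).mul_left (x ^ m)

theorem Nat.add_one_pow_le_descFactorial (m k : ℕ) :
    (k + 1) ^ m ≤ (2 * m) ^ m + 2 ^ m * k.descFactorial m := by
  rcases le_or_gt (k + 1) (2 * m) with h | h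
  · exact Nat.le_add_right_of_le (Nat.pow_le_pow_left h m)
  · calc (k + 1) ^ m ≤ (2 * (k + 1 - m)) ^ m := Nat.pow_le_pow_left (by omega) m
      _ = 2 ^ m * (k + 1 - m) ^ m := mul_pow 2 _ m
      _ ≤ 2 ^ m * k.descFactorial m := Nat.mul_le_mul_left _ (Nat.pow_sub_le_descFactorial k m)
      _ ≤ _ := Nat.le_add_left _ _

theorem Nat.factorial_add_le (k m : ℕ) : (k + m)! ≤ k ! * (m * (k + 1)) ^ m := by
  rcases Nat.eq_zero_or_pos m with rfl | hm
  · simp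
  rw [← Nat.factorial_mul_ascFactorial]
  gcongr
  exact (Nat.ascFactorial_le_pow_add k m).trans (Nat.pow_le_pow_left (by nlinarith) m)

theorem Real.rpow_le_rpow_add_rpow_neg {z t u : ℝ} (hz : 0 < z) (htu : |t| ≤ u) :
    z ^ t ≤ z ^ u + z ^ (-u) := by
  rcases le_total 1 z with hz1 | hz1
  · have := rpow_le_rpow_of_exponent_le hz1 ((le_abs_self t).trans htu)
    linarith [rpow_pos_of_pos hz (-u)]
  · have := rpow_le_rpow_of_exponent_ge hz hz1 (neg_le_of_abs_le htu)
    linarith [rpow_pos_of_pos hz u]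

theorem Real.rpow_le_rpow_mul_rpow_add_rpow_mul_rpow_neg {x y t u : ℝ} (hx : 0 < x) (hy : 0 < y)
    (htu : |t| ≤ u) : x ^ t ≤ y ^ (t - u) * x ^ u + y ^ (t + u) * x ^ (-u) := by
  have hyt := rpow_pos_of_pos hy t
  calc x ^ t = (x / y) ^ t * y ^ t := by rw [div_rpow hx.le hy.le, div_mul_cancel₀ _ hyt.ne']
    _ ≤ ((x / y) ^ u + (x / y) ^ (-u)) * y ^ t := by
        gcongr
        exact rpow_le_rpow_add_rpow_neg (div_pos hx hy) htu
    _ = _ := by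
        rw [div_rpow hx.le hy.le, div_rpow hx.le hy.le, rpow_sub hy, rpow_add hy, rpow_neg hx.le,
          rpow_neg hy.le]
        field_simp

theorem summable_weightedExpTerm (t s : ℝ) : Summable (weightedExpTerm t s) := by
  refine (Real.summable_pow_div_factorial (2 ^ |t| * |s|)).of_norm_bounded fun k => ?_
  have hk : ((k : ℝ) + 1) ^ t ≤ (2 ^ |t|) ^ k := by
    calc ((k : ℝ) + 1) ^ t ≤ ((k : ℝ) + 1) ^ |t| :=
          rpow_le_rpow_of_exponent_le (by linarith [k.cast_nonneg (α := ℝ)]) (le_abs_self t)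
      _ ≤ ((2 : ℝ) ^ k) ^ |t| := by
          gcongr
          exact_mod_cast Nat.lt_two_pow_self
      _ = (2 ^ |t|) ^ k := by
          rw [← rpow_natCast_mul zero_le_two, mul_comm, rpow_mul_natCast zero_le_two]
  rw [weightedExpTerm, norm_mul, norm_div, norm_pow, Real.norm_natCast, Real.norm_eq_abs,
    Real.norm_of_nonneg (by positivity), mul_pow]
  calc |s| ^ k / k ! * ((k : ℝ) + 1) ^ t ≤ |s| ^ k / k ! * (2 ^ |t|) ^ k := by gcongr
    _ = _ := by ring

theorem tsum_weightedExpTerm_natCast_le (m : ℕ) {s : ℝ} (hs : 0 ≤ s) :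
    ∑' k, weightedExpTerm m s k ≤ ((2 * m) ^ m + 2 ^ m) * (exp s * (1 + s) ^ (m : ℝ)) := by
  have hmajorant : HasSum
      (fun k : ℕ =>
        (2 * m : ℝ) ^ m * (s ^ k / k !) + 2 ^ m * ((k.descFactorial m : ℝ) * s ^ k / k !))
      ((2 * m) ^ m * exp s + 2 ^ m * (s ^ m * exp s)) :=
    ((hasSum_pow_div_factorial s).mul_left _).add
      ((hasSum_descFactorial_mul_pow_div_factorial m s).mul_left _)
  have hle (k : ℕ) : weightedExpTerm m s k ≤
      (2 * m : ℝ) ^ m * (s ^ k / k !) + 2 ^ m * ((k.descFactorial m : ℝ) * s ^ k / k !) := by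
    have h : ((k : ℝ) + 1) ^ m ≤ (2 * m) ^ m + 2 ^ m * k.descFactorial m := by
      exact_mod_cast Nat.add_one_pow_le_descFactorial m k
    calc weightedExpTerm m s k = s ^ k / k ! * ((k : ℝ) + 1) ^ m := by
          rw [weightedExpTerm, rpow_natCast]
      _ ≤ s ^ k / k ! * ((2 * m) ^ m + 2 ^ m * k.descFactorial m) := by gcongr
      _ = _ := by ring
  have hsm : s ^ m ≤ (1 + s) ^ m := by gcongr; linarith
  have hone : 1 ≤ (1 + s) ^ m := one_le_pow₀ (by linarith)
  calc ∑' k, weightedExpTerm m s k ≤ (2 * m) ^ m * exp s + 2 ^ m * (s ^ m * exp s) :=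
        hasSum_le hle (summable_weightedExpTerm _ _).hasSum hmajorant
    _ ≤ (2 * m) ^ m * (exp s * (1 + s) ^ m) + 2 ^ m * ((1 + s) ^ m * exp s) := by
        gcongr
        exact le_mul_of_one_le_right (exp_pos s).le hone
    _ = _ := by rw [rpow_natCast]; ring

theorem tsum_weightedExpTerm_neg_natCast_le (m : ℕ) {s : ℝ} (hs : 0 ≤ s) :
    ∑' k, weightedExpTerm (-m) s k ≤ 2 * (2 * m) ^ m * (exp s * (1 + s) ^ (-(m : ℝ))) := by
  have h1s : 0 < 1 + s := by linarith
  have hbinom : (1 + s) ^ m ≤ 2 ^ m * (1 + s ^ m) := by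
    refine (add_pow_le zero_le_one hs m).trans ?_
    rw [one_pow]
    gcongr
    exacts [one_le_two, m.sub_le 1]
  have hmajorant : HasSum (fun k : ℕ => (2 * m : ℝ) ^ m * (s ^ k / k ! + s ^ (k + m) / (k + m)!))
      ((2 * m) ^ m * (exp s + (exp s - ∑ i ∈ range m, s ^ i / i !))) :=
    ((hasSum_pow_div_factorial s).add
      ((hasSum_nat_add_iff' m).2 (hasSum_pow_div_factorial s))).mul_left _
  have hle (k : ℕ) : (1 + s) ^ m * weightedExpTerm (-m) s k ≤
      (2 * m : ℝ) ^ m * (s ^ k / k ! + s ^ (k + m) / (k + m)!) := by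
    have hfact : ((k + m)! : ℝ) ≤ k ! * (m * (k + 1)) ^ m := by
      exact_mod_cast Nat.factorial_add_le k m
    have hweight : ((k : ℝ) + 1) ^ (-(m : ℝ)) ≤ m ^ m * k ! / (k + m)! := by
      rw [rpow_neg (by positivity), rpow_natCast, le_div_iff₀ (by positivity),
        inv_mul_le_iff₀ (by positivity)]
      calc ((k + m)! : ℝ) ≤ k ! * (m * (k + 1)) ^ m := hfact
        _ = (k + 1) ^ m * (m ^ m * k !) := by rw [mul_pow]; ring
    calc (1 + s) ^ m * weightedExpTerm (-m) s k
        ≤ 2 ^ m * (1 + s ^ m) * (s ^ k / k ! * (m ^ m * k ! / (k + m)!)) := by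
          rw [weightedExpTerm]
          gcongr
      _ = (2 * m) ^ m * (s ^ k / (k + m)! + s ^ (k + m) / (k + m)!) := by
          field_simp
          ring
      _ ≤ _ := by
          gcongr
          exact Nat.le_add_right k m
  have hpartial : 0 ≤ (2 * m : ℝ) ^ m * ∑ i ∈ range m, s ^ i / i ! := by positivity
  have h := hasSum_le hle ((summable_weightedExpTerm _ _).hasSum.mul_left _) hmajorant
  rw [rpow_neg h1s.le, rpow_natCast, ← div_eq_mul_inv, mul_div_assoc', le_div_iff₀ (by positivity)]
  linarith

theorem exists_tsum_weightedExpTerm_le (t : ℝ) :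
    ∃ C, 0 < C ∧ ∀ s, 0 ≤ s → ∑' k, weightedExpTerm t s k ≤ C * (exp s * (1 + s) ^ t) := by
  obtain ⟨m, hm⟩ := exists_nat_ge |t|
  refine ⟨(2 * m) ^ m + 2 ^ m + 2 * (2 * m) ^ m, by positivity, fun s hs => ?_⟩
  have h1s : 0 < 1 + s := by linarith
  have hle (k : ℕ) : weightedExpTerm t s k ≤
      (1 + s) ^ (t - m) * weightedExpTerm m s k + (1 + s) ^ (t + m) * weightedExpTerm (-m) s k := by
    have h := rpow_le_rpow_mul_rpow_add_rpow_mul_rpow_neg (by positivity : (0 : ℝ) < k + 1) h1s hm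
    simp only [weightedExpTerm]
    calc s ^ k / k ! * ((k : ℝ) + 1) ^ t
        ≤ s ^ k / k ! * ((1 + s) ^ (t - m) * ((k : ℝ) + 1) ^ (m : ℝ) +
            (1 + s) ^ (t + m) * ((k : ℝ) + 1) ^ (-(m : ℝ))) := by gcongr
      _ = _ := by ring
  have hsplit₁ : (1 + s) ^ (t - m) * (1 + s) ^ (m : ℝ) = (1 + s) ^ t := by
    rw [← rpow_add h1s, sub_add_cancel]
  have hsplit₂ : (1 + s) ^ (t + m) * (1 + s) ^ (-(m : ℝ)) = (1 + s) ^ t := by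
    rw [← rpow_add h1s, add_neg_cancel_right]
  have hsum := (summable_weightedExpTerm (m : ℝ) s).mul_left ((1 + s) ^ (t - m))
  have hsum' := (summable_weightedExpTerm (-(m : ℝ)) s).mul_left ((1 + s) ^ (t + m))
  calc ∑' k, weightedExpTerm t s k
      ≤ ∑' k, ((1 + s) ^ (t - m) * weightedExpTerm m s k +
          (1 + s) ^ (t + m) * weightedExpTerm (-m) s k) :=
        (summable_weightedExpTerm t s).tsum_le_tsum hle (hsum.add hsum')
    _ = (1 + s) ^ (t - m) * ∑' k, weightedExpTerm m s k +
          (1 + s) ^ (t + m) * ∑' k, weightedExpTerm (-m) s k := by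
        rw [hsum.tsum_add hsum', tsum_mul_left, tsum_mul_left]
    _ ≤ (1 + s) ^ (t - m) * (((2 * m) ^ m + 2 ^ m) * (exp s * (1 + s) ^ (m : ℝ))) +
          (1 + s) ^ (t + m) * (2 * (2 * m) ^ m * (exp s * (1 + s) ^ (-(m : ℝ)))) := by
        gcongr
        exacts [tsum_weightedExpTerm_natCast_le m hs, tsum_weightedExpTerm_neg_natCast_le m hs]
    _ = _ := by linear_combination (((2 * m) ^ m + 2 ^ m) * exp s) * hsplit₁ +
          (2 * (2 * m) ^ m * exp s) * hsplit₂

theorem exp_mul_exp_le_tsum_weightedExpTerm_mul (t : ℝ) {s : ℝ} (hs : 0 ≤ s) :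
    exp s * exp s ≤ (∑' k, weightedExpTerm t s k) * ∑' k, weightedExpTerm (-t) s k := by
  have hnonneg (u : ℝ) := weightedExpTerm_nonneg u hs
  have hsq (u : ℝ) (k : ℕ) : √(weightedExpTerm u s k) ^ (2 : ℝ) = weightedExpTerm u s k := by
    rw [rpow_two, sq_sqrt (hnonneg u k)]
  have hprod (k : ℕ) : √(weightedExpTerm t s k) * √(weightedExpTerm (-t) s k) = s ^ k / k ! := by
    rw [← sqrt_mul (hnonneg t k), weightedExpTerm, weightedExpTerm,
      show s ^ k / k ! * ((k : ℝ) + 1) ^ t * (s ^ k / k ! * ((k : ℝ) + 1) ^ (-t)) =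
        (s ^ k / k !) ^ 2 * (((k : ℝ) + 1) ^ t * ((k : ℝ) + 1) ^ (-t)) by ring,
      ← rpow_add (by positivity), add_neg_cancel, rpow_zero, mul_one, sqrt_sq (by positivity)]
  have hcs := inner_le_Lp_mul_Lq_tsum_of_nonneg HolderConjugate.two_two
    (fun k => sqrt_nonneg (weightedExpTerm t s k)) (fun k => sqrt_nonneg (weightedExpTerm (-t) s k))
    (by simpa only [hsq] using summable_weightedExpTerm t s)
    (by simpa only [hsq] using summable_weightedExpTerm (-t) s)
  simp only [hprod, hsq, (hasSum_pow_div_factorial s).tsum_eq, ← sqrt_eq_rpow] at hcs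
  rw [← sqrt_mul (tsum_nonneg (hnonneg t)), le_sqrt (exp_pos s).le
    (mul_nonneg (tsum_nonneg (hnonneg t)) (tsum_nonneg (hnonneg (-t))))] at hcs
  simpa only [sq] using hcs

theorem exists_bounds_tsum_weightedExpTerm (t : ℝ) :
    ∃ c C : ℝ, 0 < c ∧ 0 < C ∧ ∀ s, 0 ≤ s →
      c * (exp s * (1 + s) ^ t) ≤ ∑' k, weightedExpTerm t s k ∧
        ∑' k, weightedExpTerm t s k ≤ C * (exp s * (1 + s) ^ t) := by
  obtain ⟨C, hC, hupper⟩ := exists_tsum_weightedExpTerm_le t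
  obtain ⟨C', hC', hupper'⟩ := exists_tsum_weightedExpTerm_le (-t)
  refine ⟨C'⁻¹, C, inv_pos.2 hC', hC, fun s hs => ⟨?_, hupper s hs⟩⟩
  have h1s : 0 < 1 + s := by linarith
  have h : exp s * exp s ≤ exp s * (C' * (1 + s) ^ (-t) * ∑' k, weightedExpTerm t s k) := by
    calc exp s * exp s ≤ (∑' k, weightedExpTerm t s k) * ∑' k, weightedExpTerm (-t) s k :=
          exp_mul_exp_le_tsum_weightedExpTerm_mul t hs
      _ ≤ (∑' k, weightedExpTerm t s k) * (C' * (exp s * (1 + s) ^ (-t))) := by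
          gcongr
          exacts [tsum_nonneg (weightedExpTerm_nonneg t hs), hupper' s hs]
      _ = _ := by ring
  have hcancel : (1 + s) ^ (-t) * (1 + s) ^ t = 1 := by
    rw [← rpow_add h1s, neg_add_cancel, rpow_zero]
  rw [inv_mul_le_iff₀ hC']
  calc exp s * (1 + s) ^ t
      ≤ C' * (1 + s) ^ (-t) * (∑' k, weightedExpTerm t s k) * (1 + s) ^ t := by
        gcongr
        exact le_of_mul_le_mul_left h (exp_pos s)
    _ = C' * ∑' k, weightedExpTerm t s k := by
        linear_combination (C' * ∑' k, weightedExpTerm t s k) * hcancel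

theorem exp_series_power_weight_estimate (a : ℝ) :
    ∃ c C : ℝ, 0 < c ∧ 0 < C ∧
      ∀ s : ℝ, 0 ≤ s →
        c * (Real.exp s / (1 + s) ^ a) ≤
          (∑' k : ℕ, s ^ k / (Nat.factorial k : ℝ) * (1 / ((k : ℝ) + 1) ^ a)) ∧
        (∑' k : ℕ, s ^ k / (Nat.factorial k : ℝ) * (1 / ((k : ℝ) + 1) ^ a)) ≤
          C * (Real.exp s / (1 + s) ^ a) := by
  obtain ⟨c, C, hc, hC, hbounds⟩ := exists_bounds_tsum_weightedExpTerm (-a)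
  refine ⟨c, C, hc, hC, fun s hs => ?_⟩
  have hterm (k : ℕ) : s ^ k / k ! * (1 / ((k : ℝ) + 1) ^ a) = weightedExpTerm (-a) s k := by
    rw [weightedExpTerm, rpow_neg (by positivity), one_div]
  have hweight : exp s / (1 + s) ^ a = exp s * (1 + s) ^ (-a) := by
    rw [rpow_neg (by linarith), div_eq_mul_inv]
  simpa only [hterm, hweight] using hbounds s hs
end

section
/- Let ℓ be a positive integer. There exist constants c, C > 0 such that for every integer m ≥ 8ℓ, c · 2^{m/ℓ} ≤ Σ_{k=0}^{m} Γ((m+2−ℓ)/ℓ) / (Γ((k+1)/ℓ) · Γ((m−k+1)/ℓ)) ≤ C · 2^{m/ℓ}. -/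
/-
Write the summand as `gammaChoose p q = Γ(p + q - 1) / (Γ p Γ q)` with `p = (k + 1)/ℓ`,
`q = (m - k + 1)/ℓ`; it is a Γ-interpolated binomial coefficient and obeys Pascal's rule
`gammaChoose p q = gammaChoose (p - 1) q + gammaChoose p (q - 1)`. Expanding every term of the sum
`S (m + ℓ)` by this rule reproduces `S m` twice, up to `2ℓ` boundary terms in which one argument
lies in `(-1, 0]`; there `1/Γ` is at most `1/2` in absolute value, so `|S (m + ℓ) - 2 S m| ≤ ℓ`.
Iterating from a starting index `m₀ ∈ [8ℓ, 9ℓ)` gives `S (m₀ + tℓ) ≍ 2^t`, provided `S m₀ > ℓ`;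
this holds because, by log-convexity of Γ, every term with `p, q ≥ 1` is at least `1`.
-/

open Real Finset

/-- Valid at every `s`: Mathlib's `Gamma` is `0` at the poles, where `1/Γ` genuinely vanishes. -/
lemma inv_Gamma_eq_mul_inv_Gamma_add_one (s : ℝ) : (Gamma s)⁻¹ = s * (Gamma (s + 1))⁻¹ := by
  rcases eq_or_ne s 0 with rfl | hs
  · simp
  · rw [Gamma_add_one hs, mul_inv, ← mul_assoc, mul_inv_cancel₀ hs, one_mul]

lemma abs_inv_Gamma_le_half {s : ℝ} (h₁ : -1 < s) (h₀ : s ≤ 0) : |(Gamma s)⁻¹| ≤ 1 / 2 := by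
  have h₃ : 1 ≤ Gamma (s + 3) := by
    simpa [Gamma_two] using Gamma_strictMonoOn_Ici.monotoneOn (by norm_num : (2:ℝ) ∈ Set.Ici 2)
      (by simp; linarith : s + 3 ∈ Set.Ici 2) (by linarith)
  have hpos : 0 < Gamma (s + 3) := by linarith
  have hs : (Gamma s)⁻¹ = s * (s + 1) * (s + 2) * (Gamma (s + 3))⁻¹ := by
    rw [inv_Gamma_eq_mul_inv_Gamma_add_one s, inv_Gamma_eq_mul_inv_Gamma_add_one (s + 1),
      inv_Gamma_eq_mul_inv_Gamma_add_one (s + 1 + 1)]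
    ring_nf
  -- `|s (s + 1)| ≤ 1/4` and `0 < s + 2 ≤ 2`
  have hpoly : |s * (s + 1) * (s + 2)| ≤ 1 / 2 := by
    rw [abs_le]
    constructor <;> nlinarith [sq_nonneg (s + 1 / 2),
      mul_nonneg (neg_nonneg.2 h₀) (by linarith : 0 ≤ s + 1)]
  rw [hs, abs_mul, abs_inv, abs_of_pos hpos]
  calc |s * (s + 1) * (s + 2)| * (Gamma (s + 3))⁻¹ ≤ 1 / 2 * 1 := by
        gcongr
        exact inv_le_one_of_one_le₀ h₃
    _ = 1 / 2 := mul_one _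

lemma Gamma_mul_Gamma_le_Gamma_add_sub_one {p q : ℝ} (hp : 1 ≤ p) (hq : 1 ≤ q) :
    Gamma p * Gamma q ≤ Gamma (p + q - 1) := by
  rcases hp.eq_or_lt with rfl | hp
  · simp [Gamma_one]
  rcases hq.eq_or_lt with rfl | hq
  · simp [Gamma_one]
  set s := p + q - 1
  have hs : 0 < s - 1 := by linarith
  have hΓs : 0 < Gamma s := Gamma_pos_of_pos (by linarith)
  -- `p` and `q` are convex combinations of `1` and `s` with swapped weights
  have hconv : ∀ a b : ℝ, 0 < a → 0 < b → a + b = 1 → Gamma (a * 1 + b * s) ≤ Gamma s ^ b := by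
    intro a b ha hb hab
    simpa [Gamma_one] using Gamma_mul_add_mul_le_rpow_Gamma_mul_rpow_Gamma one_pos
      (by linarith : 0 < s) ha hb hab
  have hp_le := hconv ((q - 1) / (s - 1)) ((p - 1) / (s - 1)) (by positivity) (by positivity)
    (by field_simp; ring)
  have hq_le := hconv ((p - 1) / (s - 1)) ((q - 1) / (s - 1)) (by positivity) (by positivity)
    (by field_simp; ring)
  rw [show (q - 1) / (s - 1) * 1 + (p - 1) / (s - 1) * s = p by field_simp; ring] at hp_le
  rw [show (p - 1) / (s - 1) * 1 + (q - 1) / (s - 1) * s = q by field_simp; ring] at hq_le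
  calc Gamma p * Gamma q ≤ Gamma s ^ ((p - 1) / (s - 1)) * Gamma s ^ ((q - 1) / (s - 1)) :=
        mul_le_mul hp_le hq_le (Gamma_pos_of_pos (by linarith)).le (by positivity)
    _ = Gamma s := by
        rw [← rpow_add hΓs, show (p - 1) / (s - 1) + (q - 1) / (s - 1) = 1 by field_simp; ring,
          rpow_one]

/-- At `p = a + 1`, `q = b + 1` with `a b : ℕ` this is `(a + b).choose a`. -/
noncomputable def gammaChoose (p q : ℝ) : ℝ :=
  Gamma (p + q - 1) / (Gamma p * Gamma q)

lemma gammaChoose_comm (p q : ℝ) : gammaChoose p q = gammaChoose q p := by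
  rw [gammaChoose, gammaChoose, add_comm p, mul_comm]

lemma gammaChoose_eq_add {p q : ℝ} (h : p + q ≠ 2) :
    gammaChoose p q = gammaChoose (p - 1) q + gammaChoose p (q - 1) := by
  have hs : p + q - 2 ≠ 0 := sub_ne_zero.2 h
  simp only [gammaChoose, div_eq_mul_inv, mul_inv]
  rw [show p + q - 1 = p + q - 2 + 1 by ring, Gamma_add_one hs,
    inv_Gamma_eq_mul_inv_Gamma_add_one (p - 1), inv_Gamma_eq_mul_inv_Gamma_add_one (q - 1)]
  ring_nf

lemma gammaChoose_nonneg {p q : ℝ} (hp : 0 ≤ p) (hq : 0 ≤ q) (hpq : 1 ≤ p + q) :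
    0 ≤ gammaChoose p q :=
  div_nonneg (Gamma_nonneg_of_nonneg (by linarith))
    (mul_nonneg (Gamma_nonneg_of_nonneg hp) (Gamma_nonneg_of_nonneg hq))

lemma one_le_gammaChoose {p q : ℝ} (hp : 1 ≤ p) (hq : 1 ≤ q) : 1 ≤ gammaChoose p q :=
  (one_le_div (mul_pos (Gamma_pos_of_pos (by linarith)) (Gamma_pos_of_pos (by linarith)))).2
    (Gamma_mul_Gamma_le_Gamma_add_sub_one hp hq)

lemma abs_gammaChoose_le_half {p q : ℝ} (h₁ : -1 < p) (h₀ : p ≤ 0) (hpq : 3 ≤ p + q) :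
    |gammaChoose p q| ≤ 1 / 2 := by
  have hq : 0 < Gamma q := Gamma_pos_of_pos (by linarith)
  have hmono : Gamma (p + q - 1) ≤ Gamma q :=
    Gamma_strictMonoOn_Ici.monotoneOn (by simp; linarith) (by simp; linarith) (by linarith)
  have hratio : |Gamma (p + q - 1) / Gamma q| ≤ 1 := by
    rw [abs_of_nonneg (div_nonneg (Gamma_nonneg_of_nonneg (by linarith)) hq.le)]
    exact div_le_one_of_le₀ hmono hq.le
  calc |gammaChoose p q| = |(Gamma p)⁻¹| * |Gamma (p + q - 1) / Gamma q| := by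
        rw [← abs_mul, gammaChoose]; ring_nf
    _ ≤ 1 / 2 * 1 := by gcongr; exact abs_inv_Gamma_le_half h₁ h₀
    _ = 1 / 2 := mul_one _

lemma gammaChoose_div_eq_add {L x y : ℝ} (hL : 0 < L) (h : x + y + 2 ≠ 2 * L) :
    gammaChoose ((x + 1) / L) ((y + 1) / L) =
      gammaChoose ((x - L + 1) / L) ((y + 1) / L) +
        gammaChoose ((x + 1) / L) ((y - L + 1) / L) := by
  have h' : (x + 1) / L + (y + 1) / L ≠ 2 := by
    rwa [← add_div, ne_eq, div_eq_iff hL.ne', show x + 1 + (y + 1) = x + y + 2 by ring]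
  rw [gammaChoose_eq_add h']
  congr 2 <;> field_simp <;> ring

lemma abs_gammaChoose_div_le_half {L x y : ℝ} (hL : 0 < L) (h₁ : -L < x + 1) (h₀ : x + 1 ≤ 0)
    (hxy : 3 * L ≤ x + y + 2) : |gammaChoose ((x + 1) / L) ((y + 1) / L)| ≤ 1 / 2 := by
  refine abs_gammaChoose_le_half ?_ (div_nonpos_of_nonpos_of_nonneg h₀ hL.le) ?_
  · rwa [lt_div_iff₀ hL, neg_one_mul]
  · rwa [← add_div, le_div_iff₀ hL, show x + 1 + (y + 1) = x + y + 2 by ring]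

lemma abs_sum_range_le_of_abs_le {n : ℕ} {e : ℕ → ℝ} {c : ℝ} (h : ∀ i < n, |e i| ≤ c) :
    |∑ i ∈ range n, e i| ≤ n * c :=
  (abs_sum_le_sum_abs _ _).trans <| by
    simpa using sum_le_card_nsmul _ _ c fun i hi ↦ h i (mem_range.1 hi)

lemma two_pow_bounds_of_abs_sub_two_mul_le {a : ℕ → ℝ} {E : ℝ}
    (h : ∀ n, |a (n + 1) - 2 * a n| ≤ E) (n : ℕ) :
    2 ^ n * (a 0 - E) + E ≤ a n ∧ a n ≤ 2 ^ n * (a 0 + E) - E := by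
  induction n with
  | zero => constructor <;> simp
  | succ n ih =>
    have hn := abs_le.1 (h n)
    rw [pow_succ]
    constructor <;> linarith [ih.1, ih.2, hn.1, hn.2]

lemma exists_eq_add_mul_of_le {b m ℓ : ℕ} (hℓ : 0 < ℓ) (hbm : b ≤ m) :
    ∃ r t, m = r + t * ℓ ∧ b ≤ r ∧ r < b + ℓ :=
  ⟨b + (m - b) % ℓ, (m - b) / ℓ, by have := Nat.mod_add_div' (m - b) ℓ; omega, by omega,
    by have := Nat.mod_lt (m - b) hℓ; omega⟩

lemma two_rpow_div_mem_Icc {r t ℓ : ℕ} (hℓ : 0 < ℓ) (hr : r < 9 * ℓ) :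
    (2 : ℝ) ^ (((r + t * ℓ : ℕ) : ℝ) / ℓ) ∈ Set.Icc (2 ^ t) (512 * 2 ^ t) := by
  have hL : (0 : ℝ) < ℓ := Nat.cast_pos.2 hℓ
  have hrL : (r : ℝ) < 9 * ℓ := by exact_mod_cast hr
  constructor
  · rw [← rpow_natCast]
    refine rpow_le_rpow_of_exponent_le one_le_two ?_
    rw [le_div_iff₀ hL]; push_cast; nlinarith [(Nat.cast_nonneg r : (0 : ℝ) ≤ r)]
  · rw [show (512 : ℝ) * 2 ^ t = 2 ^ ((t + 9 : ℕ) : ℝ) by rw [rpow_natCast]; ring]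
    refine rpow_le_rpow_of_exponent_le one_le_two ?_
    rw [div_le_iff₀ hL]; push_cast; nlinarith

noncomputable def gammaChooseSum (ℓ m : ℕ) : ℝ :=
  ∑ k ∈ range (m + 1), gammaChoose (((k : ℝ) + 1) / ℓ) (((m : ℝ) - k + 1) / ℓ)

lemma sum_Gamma_div_eq_gammaChooseSum {ℓ : ℕ} (hℓ : 0 < ℓ) (m : ℕ) :
    ∑ k ∈ range (m + 1), Gamma (((m : ℝ) + 2 - ℓ) / ℓ) /
      (Gamma (((k : ℝ) + 1) / ℓ) * Gamma (((m : ℝ) - k + 1) / ℓ)) = gammaChooseSum ℓ m := by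
  have hL : (ℓ : ℝ) ≠ 0 := Nat.cast_ne_zero.2 hℓ.ne'
  refine sum_congr rfl fun k _ ↦ ?_
  rw [gammaChoose]
  congr 2
  field_simp
  ring

lemma abs_gammaChooseSum_add_sub_two_mul_le {ℓ m : ℕ} (hℓ : 0 < ℓ) (hm : 3 * ℓ ≤ m + 2) :
    |gammaChooseSum ℓ (m + ℓ) - 2 * gammaChooseSum ℓ m| ≤ ℓ := by
  have hL : (0 : ℝ) < ℓ := Nat.cast_pos.2 hℓ
  have hmL : 3 * (ℓ : ℝ) ≤ m + 2 := by exact_mod_cast hm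
  set f : ℝ → ℝ → ℝ := fun x y ↦ gammaChoose ((x + 1) / ℓ) ((y + 1) / ℓ) with hf
  have hS (n : ℕ) : gammaChooseSum ℓ n = ∑ k ∈ range (n + 1), f k (n - k) := rfl
  have hcomm (x y : ℝ) : f x y = f y x := gammaChoose_comm _ _
  have hpascal (k : ℕ) : f k ((m + ℓ : ℕ) - k) = f (k - ℓ) (m + ℓ - k) + f k (m - k) := by
    simp only [hf]
    rw [gammaChoose_div_eq_add hL (by push_cast; linarith)]
    congr 3 <;> push_cast <;> ring
  have hleft : ∑ k ∈ range (m + ℓ + 1), f (k - ℓ) (m + ℓ - k) =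
      ∑ i ∈ range ℓ, f (i - ℓ) (m + ℓ - i) + gammaChooseSum ℓ m := by
    rw [hS, show m + ℓ + 1 = ℓ + (m + 1) by ring, sum_range_add]
    push_cast
    congr 1
    refine sum_congr rfl fun j _ ↦ ?_
    ring_nf
  have hright : ∑ k ∈ range (m + ℓ + 1), f k (m - k) =
      gammaChooseSum ℓ m + ∑ i ∈ range ℓ, f (m + 1 + i) (-1 - i) := by
    rw [hS, show m + ℓ + 1 = m + 1 + ℓ by ring, sum_range_add]
    push_cast
    congr 1
    refine sum_congr rfl fun i _ ↦ ?_
    ring_nf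
  have hsplit : gammaChooseSum ℓ (m + ℓ) - 2 * gammaChooseSum ℓ m =
      ∑ i ∈ range ℓ, f (i - ℓ) (m + ℓ - i) + ∑ i ∈ range ℓ, f (m + 1 + i) (-1 - i) := by
    rw [hS, sum_congr rfl fun k _ ↦ hpascal k, sum_add_distrib, hleft, hright]
    ring
  have hleft_le : |∑ i ∈ range ℓ, f (i - ℓ) (m + ℓ - i)| ≤ ℓ * (1 / 2) :=
    abs_sum_range_le_of_abs_le fun i hi ↦ by
      have : (i : ℝ) + 1 ≤ ℓ := by exact_mod_cast hi
      exact abs_gammaChoose_div_le_half hL (by linarith [(Nat.cast_nonneg i : (0 : ℝ) ≤ i)])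
        (by linarith) (by linarith)
  have hright_le : |∑ i ∈ range ℓ, f (m + 1 + i) (-1 - i)| ≤ ℓ * (1 / 2) :=
    abs_sum_range_le_of_abs_le fun i hi ↦ by
      have : (i : ℝ) + 1 ≤ ℓ := by exact_mod_cast hi
      rw [hcomm]
      exact abs_gammaChoose_div_le_half hL (by linarith)
        (by linarith [(Nat.cast_nonneg i : (0 : ℝ) ≤ i)]) (by linarith)
  rw [hsplit]
  linarith [abs_add_le (∑ i ∈ range ℓ, f (i - ℓ) (m + ℓ - i))
    (∑ i ∈ range ℓ, f (m + 1 + i) (-1 - i))]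

lemma sub_two_mul_le_gammaChooseSum {ℓ m : ℕ} (hℓ : 0 < ℓ) (hm : 2 * ℓ ≤ m + 3) :
    (m : ℝ) + 3 - 2 * ℓ ≤ gammaChooseSum ℓ m := by
  have hL : (0 : ℝ) < ℓ := Nat.cast_pos.2 hℓ
  set B := Icc (ℓ - 1) (m + 1 - ℓ)
  have hB : B.card + 2 * ℓ = m + 3 := by rw [Nat.card_Icc]; omega
  have hterm (k : ℕ) (hk : k ∈ B) :
      1 ≤ gammaChoose (((k : ℝ) + 1) / ℓ) (((m : ℝ) - k + 1) / ℓ) := by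
    obtain ⟨hk₁, hk₂⟩ := mem_Icc.1 hk
    have h₁ : (ℓ : ℝ) ≤ k + 1 := by exact_mod_cast (by omega : ℓ ≤ k + 1)
    have h₂ : (k : ℝ) + ℓ ≤ m + 1 := by exact_mod_cast (by omega : k + ℓ ≤ m + 1)
    exact one_le_gammaChoose ((one_le_div hL).2 h₁) ((one_le_div hL).2 (by linarith))
  have hnonneg (k : ℕ) (hk : k ∈ range (m + 1)) :
      0 ≤ gammaChoose (((k : ℝ) + 1) / ℓ) (((m : ℝ) - k + 1) / ℓ) := by
    have hkm : (k : ℝ) ≤ m := by exact_mod_cast Nat.lt_succ_iff.1 (mem_range.1 hk)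
    have hmℓ : (ℓ : ℝ) ≤ m + 2 := by exact_mod_cast (by omega : ℓ ≤ m + 2)
    refine gammaChoose_nonneg (by positivity) (div_nonneg (by linarith) hL.le) ?_
    rw [← add_div, le_div_iff₀ hL]
    linarith
  calc (m : ℝ) + 3 - 2 * ℓ = B.card := by
        rw [sub_eq_iff_eq_add]; exact_mod_cast hB.symm
    _ ≤ ∑ k ∈ B, gammaChoose (((k : ℝ) + 1) / ℓ) (((m : ℝ) - k + 1) / ℓ) := by
        simpa using card_nsmul_le_sum B _ 1 hterm
    _ ≤ gammaChooseSum ℓ m :=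
        sum_le_sum_of_subset_of_nonneg (fun k hk ↦ mem_range.2 (by have := (mem_Icc.1 hk).2; omega))
          fun k hk _ ↦ hnonneg k hk

theorem gamma_sum_estimate (ℓ : ℕ) (hℓ : 0 < ℓ) :
    ∃ c C : ℝ, 0 < c ∧ 0 < C ∧
      ∀ m : ℕ, 8 * ℓ ≤ m →
        c * 2 ^ ((m : ℝ) / (ℓ : ℝ)) ≤
          (∑ k ∈ Finset.range (m + 1),
            Real.Gamma (((m : ℝ) + 2 - (ℓ : ℝ)) / (ℓ : ℝ)) /
              (Real.Gamma (((k : ℝ) + 1) / (ℓ : ℝ)) *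
                Real.Gamma (((m : ℝ) - (k : ℝ) + 1) / (ℓ : ℝ)))) ∧
        (∑ k ∈ Finset.range (m + 1),
            Real.Gamma (((m : ℝ) + 2 - (ℓ : ℝ)) / (ℓ : ℝ)) /
              (Real.Gamma (((k : ℝ) + 1) / (ℓ : ℝ)) *
                Real.Gamma (((m : ℝ) - (k : ℝ) + 1) / (ℓ : ℝ)))) ≤
          C * 2 ^ ((m : ℝ) / (ℓ : ℝ)) := by
  obtain ⟨M, hM₀, hM⟩ : ∃ M : ℝ, 0 ≤ M ∧ ∀ r < 9 * ℓ, gammaChooseSum ℓ r ≤ M :=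
    ⟨∑ r ∈ range (9 * ℓ), |gammaChooseSum ℓ r|, sum_nonneg fun _ _ ↦ abs_nonneg _,
      fun r hr ↦ (le_abs_self _).trans <| single_le_sum (f := fun r ↦ |gammaChooseSum ℓ r|)
        (fun _ _ ↦ abs_nonneg _) (mem_range.2 hr)⟩
  refine ⟨1 / 512, M + ℓ, by norm_num, by positivity, fun m hm ↦ ?_⟩
  rw [sum_Gamma_div_eq_gammaChooseSum hℓ]
  obtain ⟨r, t, rfl, hr₈, hr₉⟩ := exists_eq_add_mul_of_le hℓ hm
  obtain ⟨hlow, hup⟩ := two_pow_bounds_of_abs_sub_two_mul_le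
    (a := fun n ↦ gammaChooseSum ℓ (r + n * ℓ)) (E := ℓ) (fun n ↦ by
      simpa [add_mul, add_assoc] using
        abs_gammaChooseSum_add_sub_two_mul_le hℓ (m := r + n * ℓ) (by nlinarith)) t
  obtain ⟨hpow_low, hpow_up⟩ := two_rpow_div_mem_Icc (t := t) hℓ (by omega : r < 9 * ℓ)
  have hbase : (ℓ : ℝ) + 1 ≤ gammaChooseSum ℓ r := by
    have : 8 * (ℓ : ℝ) ≤ r := by exact_mod_cast hr₈
    linarith [sub_two_mul_le_gammaChooseSum hℓ (m := r) (by omega)]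
  simp only [zero_mul, add_zero] at hlow hup
  constructor
  · calc 1 / 512 * (2 : ℝ) ^ (((r + t * ℓ : ℕ) : ℝ) / ℓ) ≤ 2 ^ t := by linarith
      _ ≤ 2 ^ t * (gammaChooseSum ℓ r - ℓ) + ℓ := by nlinarith [pow_pos (two_pos : (0 : ℝ) < 2) t]
      _ ≤ _ := hlow
  · calc gammaChooseSum ℓ (r + t * ℓ) ≤ 2 ^ t * (M + ℓ) := by
          nlinarith [pow_pos (two_pos : (0 : ℝ) < 2) t, hM r (by omega)]
      _ ≤ (M + ℓ) * 2 ^ (((r + t * ℓ : ℕ) : ℝ) / ℓ) := by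
          rw [mul_comm]; gcongr
end

section
/- Let ℓ be a positive integer and α > 0. The reproducing (Bergman) kernel K of the Fock space F^{2,ℓ}_α satisfies K(z,w) = (ℓ α^{1/ℓ}/π) Σ_{m=0}^{∞} α^{m/ℓ} z^m \overline{w}^m / Γ((m+1)/ℓ) for all z, w ∈ ℂ. -/
/-!
Expand `K(·, w)` in its Taylor series `∑ bₙ uⁿ`. The reproducing property applied to the
monomial `u ↦ uᵐ` gives `conj w ^ m = ∫ conj u ^ m K(u, w) e^{-α|u|^{2ℓ}} du`. In polar
coordinates the weight is radial, so integrating over each circle first kills every term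
of the Taylor series except the `m`-th, leaving `bₘ · 2π ∫₀^∞ r^{2m+1} e^{-α r^{2ℓ}} dr`,
a Gamma integral. Solving for `bₘ` and resumming gives the series.
-/

open MeasureTheory Set Complex
open scoped Real NNReal ENNReal ComplexConjugate

theorem Differentiable.exists_hasSum_coeff_mul_pow {g : ℂ → ℂ} (hg : Differentiable ℂ g) :
    ∃ b : ℕ → ℂ, ∀ u : ℂ,
      HasSum (fun n => b n * u ^ n) (g u) ∧ Summable fun n => ‖b n * u ^ n‖ := by
  have hp := hg.hasFPowerSeriesOnBall 0 one_pos
  refine ⟨(cauchyPowerSeries g 0 1).coeff, fun u => ⟨?_, ?_⟩⟩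
  · simpa [mul_comm] using hp.hasSum (y := u) (by simp)
  · have hu : ((‖u‖₊ : ℝ≥0) : ℝ≥0∞) < (cauchyPowerSeries g 0 1).radius :=
      lt_of_lt_of_le ENNReal.coe_lt_top hp.r_le
    simpa [FormalMultilinearSeries.norm_apply_eq_norm_coef] using
      (cauchyPowerSeries g 0 1).summable_norm_mul_pow hu

theorem integrableOn_polarCoord_target_iff {E : Type*} [NormedAddCommGroup E] [NormedSpace ℝ E]
    (f : ℝ × ℝ → E) :
    IntegrableOn (fun p => p.1 • f (polarCoord.symm p)) polarCoord.target ↔ Integrable f := by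
  rw [← integrableOn_univ, ← integrableOn_congr_set_ae polarCoord_source_ae_eq_univ,
    ← polarCoord.symm_image_target_eq_source,
    integrableOn_image_iff_integrableOn_abs_det_fderiv_smul volume
      polarCoord.open_target.measurableSet
      (fun p _ => (hasFDerivAt_polarCoord_symm p).hasFDerivWithinAt) polarCoord.symm.injOn]
  refine integrableOn_congr_fun (fun p hp => ?_) polarCoord.open_target.measurableSet
  rw [det_fderivPolarCoordSymm, abs_of_pos hp.1]

theorem Complex.integrableOn_polarCoord_target_iff {E : Type*} [NormedAddCommGroup E]
    [NormedSpace ℝ E] (f : ℂ → E) :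
    IntegrableOn (fun p => p.1 • f (Complex.polarCoord.symm p)) polarCoord.target ↔
      Integrable f := by
  rw [← (volume_preserving_equiv_real_prod.symm).integrable_comp_emb
      measurableEquivRealProd.symm.measurableEmbedding, ← _root_.integrableOn_polarCoord_target_iff]
  rfl

theorem integrable_conj_mul_mul_of_sq {X : Type*} [MeasurableSpace X] {μ : Measure X}
    {f g : X → ℂ} {ρ : X → ℝ} (hf : AEStronglyMeasurable f μ) (hg : AEStronglyMeasurable g μ)
    (hρm : AEStronglyMeasurable ρ μ) (hρ : ∀ x, 0 ≤ ρ x)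
    (hf2 : Integrable (fun x => ‖f x‖ ^ 2 * ρ x) μ)
    (hg2 : Integrable (fun x => ‖g x‖ ^ 2 * ρ x) μ) :
    Integrable (fun x => conj (f x) * g x * (ρ x : ℂ)) μ := by
  refine ((hf2.add hg2).div_const 2).mono'
    ((hf.star.mul hg).mul (continuous_ofReal.comp_aestronglyMeasurable hρm))
    (ae_of_all _ fun x => ?_)
  have hsq : 0 ≤ (‖f x‖ - ‖g x‖) ^ 2 * ρ x := mul_nonneg (sq_nonneg _) (hρ x)
  simp only [norm_mul, norm_conj, norm_real, Real.norm_of_nonneg (hρ x), Pi.add_apply]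
  nlinarith

theorem integrableOn_pow_mul_exp_neg_mul_pow (j : ℕ) {q : ℕ} (hq : 0 < q) {α : ℝ} (hα : 0 < α) :
    IntegrableOn (fun r : ℝ => r ^ j * Real.exp (-α * r ^ q)) (Ioi 0) := by
  simpa only [Real.rpow_natCast] using integrableOn_rpow_mul_exp_neg_mul_rpow
    (s := j) (by linarith [j.cast_nonneg (α := ℝ)]) (Nat.cast_pos.mpr hq) hα

theorem integral_pow_mul_exp_neg_mul_pow (j : ℕ) {q : ℕ} (hq : 0 < q) {α : ℝ} (hα : 0 < α) :
    ∫ r in Ioi (0 : ℝ), r ^ j * Real.exp (-α * r ^ q) =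
      α ^ (-((j + 1) / q : ℝ)) * (1 / q) * Real.Gamma ((j + 1) / q) := by
  simpa only [Real.rpow_natCast, neg_div] using _root_.integral_rpow_mul_exp_neg_mul_rpow
    (q := j) (Nat.cast_pos.mpr hq) (by linarith [j.cast_nonneg (α := ℝ)]) hα

theorem integrable_norm_pow_sq_mul_exp_neg_mul_norm_pow (m : ℕ) {q : ℕ} (hq : 0 < q) {α : ℝ}
    (hα : 0 < α) :
    Integrable fun u : ℂ => ‖u ^ m‖ ^ 2 * Real.exp (-α * ‖u‖ ^ q) := by
  have h := (integrable_fun_norm_addHaar (volume : Measure ℂ)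
    (f := fun r : ℝ => r ^ (2 * m) * Real.exp (-α * r ^ q))).mpr ?_
  · simpa only [norm_pow, ← pow_mul, mul_comm m 2] using h
  · simpa only [Complex.finrank_real_complex, smul_eq_mul, ← mul_assoc, ← pow_add] using
      integrableOn_pow_mul_exp_neg_mul_pow _ hq hα

theorem integral_Ioo_neg_pi_pi_exp_int_mul_I (k : ℤ) :
    ∫ θ in Ioo (-π) π, exp (k * θ * I) = if k = 0 then ((2 * π : ℝ) : ℂ) else 0 := by
  rw [← integral_Ioc_eq_integral_Ioo, ← intervalIntegral.integral_of_le (by linarith [Real.pi_pos])]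
  split_ifs with hk
  · simp [hk, two_mul]
  · have hkI : (k : ℂ) * I ≠ 0 := by simp [hk]
    simp_rw [mul_right_comm _ _ I]
    have hper : exp (k * I * π) = exp (k * I * -π) :=
      exp_eq_exp_iff_exists_int.mpr ⟨k, by ring⟩
    rw [integral_exp_mul_complex hkI, hper, ofReal_neg, sub_self, zero_div]

theorem conj_pow_mul_pow_ofReal_mul_exp (r θ : ℝ) (m n : ℕ) :
    conj (r * exp (θ * I)) ^ m * (r * exp (θ * I)) ^ n =
      (r : ℂ) ^ (n + m) * exp (((n : ℤ) - m : ℤ) * θ * I) := by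
  rw [map_mul, conj_ofReal, ← exp_conj, map_mul, conj_ofReal, conj_I, mul_pow, mul_pow,
    ← exp_nat_mul, ← exp_nat_mul, mul_mul_mul_comm, ← pow_add, ← exp_add, add_comm m n]
  push_cast
  ring_nf

theorem integral_conj_pow_mul_on_circle {g : ℂ → ℂ} {b : ℕ → ℂ}
    (hg : ∀ u, HasSum (fun n => b n * u ^ n) (g u)) (hb : ∀ u, Summable fun n => ‖b n * u ^ n‖)
    (m : ℕ) (r : ℝ) :
    ∫ θ in Ioo (-π) π, conj (r * exp (θ * I)) ^ m * g (r * exp (θ * I)) =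
      2 * π * b m * r ^ (2 * m) := by
  set T : ℕ → ℝ → ℂ := fun n θ => conj (r * exp (θ * I)) ^ m * (b n * (r * exp (θ * I)) ^ n)
  have hT : ∀ n θ, T n θ = b n * r ^ (n + m) * exp (((n : ℤ) - m : ℤ) * θ * I) := fun n θ => by
    simp only [T, mul_left_comm _ (b n), conj_pow_mul_pow_ofReal_mul_exp, mul_assoc]
  have hT_norm : ∀ n θ, ‖T n θ‖ = |r| ^ m * ‖b n * (r : ℂ) ^ n‖ := fun n θ => by
    simp [T, norm_exp_ofReal_mul_I]
  have hT_int : ∀ n, IntegrableOn (T n) (Ioo (-π) π) := fun n =>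
    (Continuous.integrableOn_Icc (by fun_prop)).mono_set Ioo_subset_Icc_self
  have hT_sum : Summable fun n => ∫ θ in Ioo (-π) π, ‖T n θ‖ := by
    simp only [hT_norm, setIntegral_const, smul_eq_mul]
    exact ((hb r).mul_left (|r| ^ m)).mul_left _
  calc ∫ θ in Ioo (-π) π, conj (r * exp (θ * I)) ^ m * g (r * exp (θ * I))
      = ∫ θ in Ioo (-π) π, ∑' n, T n θ :=
        integral_congr_ae (ae_of_all _ fun θ => (((hg _).mul_left _).tsum_eq).symm)
    _ = ∑' n, ∫ θ in Ioo (-π) π, T n θ :=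
        (integral_tsum_of_summable_integral_norm hT_int hT_sum).symm
    _ = ∑' n, if n = m then 2 * π * b m * r ^ (2 * m) else 0 := by
        refine tsum_congr fun n => ?_
        simp only [hT, integral_const_mul, integral_Ioo_neg_pi_pi_exp_int_mul_I, sub_eq_zero,
          Nat.cast_inj]
        split_ifs with h
        · subst h; push_cast; ring_nf
        · rw [mul_zero]
    _ = 2 * π * b m * r ^ (2 * m) := tsum_ite_eq m _

theorem integral_conj_pow_mul_radial {g : ℂ → ℂ} {b : ℕ → ℂ}
    (hg : ∀ u, HasSum (fun n => b n * u ^ n) (g u)) (hb : ∀ u, Summable fun n => ‖b n * u ^ n‖)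
    (m : ℕ) {ρ : ℝ → ℝ} (hint : Integrable fun u : ℂ => conj u ^ m * g u * (ρ ‖u‖ : ℂ)) :
    ∫ u : ℂ, conj u ^ m * g u * (ρ ‖u‖ : ℂ) =
      2 * π * b m * ((∫ r in Ioi (0 : ℝ), r ^ (2 * m + 1) * ρ r : ℝ) : ℂ) := by
  have hpolar := (Complex.integrableOn_polarCoord_target_iff _).mpr hint
  rw [polarCoord_target, Measure.volume_eq_prod] at hpolar
  rw [← Complex.integral_comp_polarCoord_symm, polarCoord_target, Measure.volume_eq_prod,
    setIntegral_prod _ hpolar, ← integral_complex_ofReal, ← integral_const_mul]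
  refine setIntegral_congr_fun measurableSet_Ioi fun r (hr : 0 < r) => ?_
  have hsymm : ∀ θ : ℝ, Complex.polarCoord.symm (r, θ) = r * exp (θ * I) := fun θ => by
    rw [Complex.polarCoord_symm_apply, exp_mul_I, ← ofReal_cos, ← ofReal_sin]
  have hnorm : ∀ θ : ℝ, ‖(r : ℂ) * exp (θ * I)‖ = r := fun θ => by
    rw [norm_mul, norm_exp_ofReal_mul_I, mul_one, norm_real, Real.norm_of_nonneg hr.le]
  simp only [hsymm, hnorm, real_smul]
  calc ∫ θ in Ioo (-π) π, (r : ℂ) * (conj (r * exp (θ * I)) ^ m * g (r * exp (θ * I)) * ρ r)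
      = (r * ρ r : ℂ) * ∫ θ in Ioo (-π) π, conj (r * exp (θ * I)) ^ m * g (r * exp (θ * I)) := by
        rw [← integral_const_mul]; congr 1 with θ; ring
    _ = 2 * π * b m * ((r ^ (2 * m + 1) * ρ r : ℝ) : ℂ) := by
        rw [integral_conj_pow_mul_on_circle hg hb]; push_cast; ring

theorem coeff_eq_of_reproducing_pow {ℓ : ℕ} (hℓ : 0 < ℓ) {α : ℝ} (hα : 0 < α) {g : ℂ → ℂ}
    {b : ℕ → ℂ} (hg : ∀ u, HasSum (fun n => b n * u ^ n) (g u))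
    (hb : ∀ u, Summable fun n => ‖b n * u ^ n‖) (hg_cont : Continuous g)
    (hg_mem : Integrable fun u : ℂ => ‖g u‖ ^ 2 * Real.exp (-α * ‖u‖ ^ (2 * ℓ))) (w : ℂ) (m : ℕ)
    (hrep : w ^ m = ∫ u : ℂ, u ^ m * conj (g u) * (Real.exp (-α * ‖u‖ ^ (2 * ℓ)) : ℂ)) :
    b m = ((ℓ * α ^ ((m + 1) / ℓ : ℝ) / (π * Real.Gamma ((m + 1) / ℓ)) : ℝ) : ℂ) * conj w ^ m := by
  set ρ : ℝ → ℝ := fun r => Real.exp (-α * r ^ (2 * ℓ))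
  have hint : Integrable fun u : ℂ => conj u ^ m * g u * (ρ ‖u‖ : ℂ) := by
    simpa only [map_pow] using integrable_conj_mul_mul_of_sq (continuous_pow m).aestronglyMeasurable
      hg_cont.aestronglyMeasurable (by fun_prop) (fun u => (Real.exp_pos _).le)
      (integrable_norm_pow_sq_mul_exp_neg_mul_norm_pow m (by omega) hα) hg_mem
  have hconj : conj w ^ m = ∫ u : ℂ, conj u ^ m * g u * (ρ ‖u‖ : ℂ) := by
    rw [← map_pow, hrep, ← integral_conj]
    simp only [map_mul, map_pow, conj_conj, conj_ofReal, ρ]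
  rw [integral_conj_pow_mul_radial hg hb m hint, integral_pow_mul_exp_neg_mul_pow _ (by omega) hα]
    at hconj
  have hexp : ((2 * m + 1 : ℕ) + 1) / (2 * ℓ : ℕ) = ((m + 1) / ℓ : ℝ) := by
    push_cast; field_simp; ring
  have hΓ : Real.Gamma ((m + 1) / ℓ) ≠ 0 := (Real.Gamma_pos_of_pos (by positivity)).ne'
  have hpow : ((α ^ (-((m + 1) / ℓ : ℝ)) : ℝ) : ℂ) * ((α ^ ((m + 1) / ℓ : ℝ) : ℝ) : ℂ) = 1 := by
    rw [← ofReal_mul, ← Real.rpow_add hα, neg_add_cancel, Real.rpow_zero, ofReal_one]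
  have hℓ' : (ℓ : ℂ) ≠ 0 := by exact_mod_cast hℓ.ne'
  have hπ : (π : ℂ) ≠ 0 := ofReal_ne_zero.mpr Real.pi_ne_zero
  have hΓ' : (Real.Gamma ((m + 1) / ℓ) : ℂ) ≠ 0 := ofReal_ne_zero.mpr hΓ
  rw [hexp] at hconj
  rw [hconj]
  push_cast
  field_simp
  linear_combination (-b m) * hpow

/-- The reproducing (Bergman) kernel of the generalized Fock space `F^{2,ℓ}_α`
is given by the explicit series `(ℓ α^{1/ℓ}/π) ∑ α^{m/ℓ} z^m w̄^m / Γ((m+1)/ℓ)`.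
The kernel `K` is characterized by: `K(·,z)` belongs to the space and
`f(z) = ⟨f, K(·,z)⟩` for every `f` in the space. -/
theorem bergman_kernel_series (ℓ : ℕ) (hℓ : 0 < ℓ) (α : ℝ) (hα : 0 < α)
    (K : ℂ → ℂ → ℂ)
    (hK_mem : ∀ z : ℂ, Differentiable ℂ (fun w => K w z) ∧
      Integrable (fun w : ℂ =>
        ‖K w z‖ ^ 2 * Real.exp (-α * ‖w‖ ^ (2 * ℓ))))
    (hK_rep : ∀ f : ℂ → ℂ, Differentiable ℂ f →
      Integrable (fun z : ℂ =>
        ‖f z‖ ^ 2 * Real.exp (-α * ‖z‖ ^ (2 * ℓ))) →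
      ∀ z : ℂ, f z = ∫ w : ℂ, f w * (starRingEnd ℂ) (K w z) *
        (Real.exp (-α * ‖w‖ ^ (2 * ℓ)) : ℂ)) :
    ∀ z w : ℂ, K z w =
      (((ℓ : ℝ) * α ^ (1 / (ℓ : ℝ)) / Real.pi : ℝ) : ℂ) *
        ∑' m : ℕ, ((α ^ ((m : ℝ) / (ℓ : ℝ)) : ℝ) : ℂ) * z ^ m *
          (starRingEnd ℂ) w ^ m / ((Real.Gamma (((m : ℝ) + 1) / (ℓ : ℝ)) : ℝ) : ℂ) := by
  intro z w
  obtain ⟨hK_diff, hK_int⟩ := hK_mem w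
  obtain ⟨b, hb⟩ := hK_diff.exists_hasSum_coeff_mul_pow
  have hcoeff (m : ℕ) := coeff_eq_of_reproducing_pow hℓ hα (fun u => (hb u).1) (fun u => (hb u).2)
    hK_diff.continuous hK_int w m (hK_rep _ (differentiable_pow m)
      (integrable_norm_pow_sq_mul_exp_neg_mul_norm_pow m (by omega) hα) w)
  rw [← (hb z).1.tsum_eq, ← tsum_mul_left]
  refine tsum_congr fun m => ?_
  rw [hcoeff m, add_div, Real.rpow_add hα]
  push_cast
  ring
end
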